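/- arXiv:2212.10902 — 6 statements merged into one kernel-verified Lean document; each statement's English description precedes it below -/
import Mathlib

section
/- Let Ω ⊆ ℝ³ be open, let G : Ω → ℝ be C², let ρ, θ : Ω → (0,∞) be C², and let p : (0,∞)² → ℝ be C². Assume the static balance ∇ₓ[p(ρ(x), θ(x))] = ρ(x) ∇G(x) holds for every x ∈ Ω, and that ∂p/∂θ(ρ(x), θ(x)) ≠ 0 for every x ∈ Ω. Then ∇ρ(x) × ∇G(x) = 0 and ∇θ(x) × ∇G(x) = 0 for every x ∈ Ω, i.e. both ∇ρ and ∇θ are parallel to ∇G. -/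
/-!
Taking the curl of `∇(p(ρ,θ)) = ρ ∇G`, symmetry of the second derivatives of `p(ρ,θ)` and `G`
leaves `∇ρ × ∇G = 0`. By the chain rule the balance reads `p_ρ ∇ρ + p_θ ∇θ = ρ ∇G`; crossing
with `∇G` gives `p_θ (∇θ × ∇G) = 0`, and `p_θ ≠ 0`.
-/

open Set

/-- The gradient of a scalar field on `ℝ³`, as the vector of partial derivatives. -/
noncomputable def grad3 (f : (Fin 3 → ℝ) → ℝ) (x : Fin 3 → ℝ) : Fin 3 → ℝ :=
  fun i => fderiv ℝ f x (Pi.single i 1)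

open Filter Topology
open scoped Matrix

theorem fderiv_apply_mul_comm_of_fderiv_eq_smul {E : Type*} [NormedAddCommGroup E]
    [NormedSpace ℝ E] {F G ρ : E → ℝ} {x : E} (hF : ContDiffAt ℝ 2 F x)
    (hG : ContDiffAt ℝ 2 G x) (hρ : DifferentiableAt ℝ ρ x)
    (h : fderiv ℝ F =ᶠ[𝓝 x] ρ • fderiv ℝ G) (v w : E) :
    fderiv ℝ ρ x v * fderiv ℝ G x w = fderiv ℝ ρ x w * fderiv ℝ G x v := by
  have hG' : DifferentiableAt ℝ (fderiv ℝ G) x :=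
    (hG.fderiv_right (m := 1) le_rfl).differentiableAt one_ne_zero
  have hD2F : ∀ v w, fderiv ℝ (fderiv ℝ F) x v w =
      ρ x * fderiv ℝ (fderiv ℝ G) x v w + fderiv ℝ ρ x v * fderiv ℝ G x w := by
    intro v w
    rw [h.fderiv_eq, fderiv_smul hρ hG']
    simp
  have hFsymm := (hF.isSymmSndFDerivAt (by simp)).eq v w
  have hGsymm := (hG.isSymmSndFDerivAt (by simp)).eq v w
  rw [hD2F, hD2F, hGsymm] at hFsymm
  linarith

theorem crossProduct_eq_zero_of_mul_comm {R : Type*} [CommRing R] {a b : Fin 3 → R}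
    (h : ∀ i j, a i * b j = a j * b i) : a ⨯₃ b = 0 := by
  ext k
  fin_cases k <;> simp [cross_apply, h 1 2, h 2 0, h 0 1]

theorem fderiv_eq_smul_of_grad3_eq_smul {f g : (Fin 3 → ℝ) → ℝ} {x : Fin 3 → ℝ} {c : ℝ}
    (h : grad3 f x = c • grad3 g x) : fderiv ℝ f x = c • fderiv ℝ g x := by
  refine ContinuousLinearMap.coe_injective (LinearMap.pi_ext fun i t => ?_)
  have hi := congrFun h i
  simp only [grad3, Pi.smul_apply, smul_eq_mul] at hi
  have hsingle : Pi.single i t = t • Pi.single i (1 : ℝ) := by simp [← Pi.single_smul]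
  simp [hsingle, hi]

theorem fderiv_comp_prodMk_eq_deriv_smul_add {E : Type*} [NormedAddCommGroup E] [NormedSpace ℝ E]
    {p : ℝ → ℝ → ℝ} {ρ θ : E → ℝ} {x : E}
    (hp : DifferentiableAt ℝ (fun q : ℝ × ℝ => p q.1 q.2) (ρ x, θ x))
    (hρ : DifferentiableAt ℝ ρ x) (hθ : DifferentiableAt ℝ θ x) :
    fderiv ℝ (fun y => p (ρ y) (θ y)) x =
      deriv (fun r => p r (θ x)) (ρ x) • fderiv ℝ ρ x +
        deriv (fun t => p (ρ x) t) (θ x) • fderiv ℝ θ x := by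
  set P' := fderiv ℝ (fun q : ℝ × ℝ => p q.1 q.2) (ρ x, θ x)
  have hcomp : HasFDerivAt (fun y => p (ρ y) (θ y))
      (P'.comp ((fderiv ℝ ρ x).prod (fderiv ℝ θ x))) x :=
    hp.hasFDerivAt.comp (g := fun q : ℝ × ℝ => p q.1 q.2) x
      (hρ.hasFDerivAt.prodMk hθ.hasFDerivAt)
  have hpr : HasDerivAt (fun r => p r (θ x)) (P' (1, 0)) (ρ x) :=
    hp.hasFDerivAt.comp_hasDerivAt (l := fun q : ℝ × ℝ => p q.1 q.2) (ρ x)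
      ((hasDerivAt_id (ρ x)).prodMk (hasDerivAt_const (ρ x) (θ x)))
  have hpt : HasDerivAt (fun t => p (ρ x) t) (P' (0, 1)) (θ x) :=
    hp.hasFDerivAt.comp_hasDerivAt (l := fun q : ℝ × ℝ => p q.1 q.2) (θ x)
      ((hasDerivAt_const (θ x) (ρ x)).prodMk (hasDerivAt_id (θ x)))
  rw [hcomp.fderiv, hpr.deriv, hpt.deriv]
  ext v
  have hsplit : (fderiv ℝ ρ x v, fderiv ℝ θ x v) =
      fderiv ℝ ρ x v • ((1 : ℝ), (0 : ℝ)) + fderiv ℝ θ x v • ((0 : ℝ), (1 : ℝ)) := by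
    simp
  simp only [ContinuousLinearMap.comp_apply, ContinuousLinearMap.prod_apply, hsplit, map_add,
    map_smul, add_apply, smul_apply, smul_eq_mul]
  ring

theorem apply_mul_comm_of_add_smul_eq_smul {E : Type*} [NormedAddCommGroup E] [NormedSpace ℝ E]
    {a b g : E →L[ℝ] ℝ} {s t c : ℝ} (hc : c ≠ 0) (ha : ∀ v w, a v * g w = a w * g v)
    (h : t • a + c • b = s • g) (v w : E) : b v * g w = b w * g v := by
  have hv := congr($h v)
  have hw := congr($h w)
  simp only [add_apply, smul_apply, smul_eq_mul] at hv hw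
  have hcb : c * (b v * g w - b w * g v) = 0 := by
    linear_combination g w * hv - g v * hw - t * ha v w
  linarith [(mul_eq_zero.mp hcb).resolve_left hc]

theorem crossProduct_grad3_eq_zero {f g : (Fin 3 → ℝ) → ℝ} {x : Fin 3 → ℝ}
    (h : ∀ v w, fderiv ℝ f x v * fderiv ℝ g x w = fderiv ℝ f x w * fderiv ℝ g x v) :
    grad3 f x ⨯₃ grad3 g x = 0 :=
  crossProduct_eq_zero_of_mul_comm fun _ _ => h _ _

/-- if the static balance `∇(p(ρ,θ)) = ρ ∇G` holds on an open set `Ω`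
and `∂p/∂θ ≠ 0` there, then both `∇ρ` and `∇θ` are parallel to `∇G`
(their cross products with `∇G` vanish). -/
theorem stmt_0
    (Ω : Set (Fin 3 → ℝ)) (hΩ : IsOpen Ω)
    (G ρ θ : (Fin 3 → ℝ) → ℝ) (p : ℝ → ℝ → ℝ)
    (hG : ContDiffOn ℝ 2 G Ω)
    (hρ : ContDiffOn ℝ 2 ρ Ω) (hθ : ContDiffOn ℝ 2 θ Ω)
    (hρpos : ∀ x ∈ Ω, 0 < ρ x) (hθpos : ∀ x ∈ Ω, 0 < θ x)
    (hp : ContDiffOn ℝ 2 (fun q : ℝ × ℝ => p q.1 q.2) (Ioi (0:ℝ) ×ˢ Ioi (0:ℝ)))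
    (hstatic : ∀ x ∈ Ω, grad3 (fun y => p (ρ y) (θ y)) x = ρ x • grad3 G x)
    (hpθ : ∀ x ∈ Ω, deriv (fun ϑ => p (ρ x) ϑ) (θ x) ≠ 0) :
    ∀ x ∈ Ω,
      crossProduct (grad3 ρ x) (grad3 G x) = 0 ∧
      crossProduct (grad3 θ x) (grad3 G x) = 0 := by
  intro x hx
  have hΩx : Ω ∈ 𝓝 x := hΩ.mem_nhds hx
  have hGx := hG.contDiffAt hΩx
  have hρx := (hρ.contDiffAt hΩx).differentiableAt two_ne_zero
  have hθx := (hθ.contDiffAt hΩx).differentiableAt two_ne_zero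
  have hpx : ContDiffAt ℝ 2 (fun q : ℝ × ℝ => p q.1 q.2) (ρ x, θ x) :=
    hp.contDiffAt ((isOpen_Ioi.prod isOpen_Ioi).mem_nhds ⟨hρpos x hx, hθpos x hx⟩)
  have hFx : ContDiffAt ℝ 2 (fun y => p (ρ y) (θ y)) x :=
    hpx.comp (g := fun q : ℝ × ℝ => p q.1 q.2) x
      ((hρ.contDiffAt hΩx).prodMk (hθ.contDiffAt hΩx))
  have hdF : ∀ y ∈ Ω, fderiv ℝ (fun y => p (ρ y) (θ y)) y = ρ y • fderiv ℝ G y :=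
    fun y hy => fderiv_eq_smul_of_grad3_eq_smul (hstatic y hy)
  have hρG := fderiv_apply_mul_comm_of_fderiv_eq_smul hFx hGx hρx (eventually_of_mem hΩx hdF)
  have hchain := fderiv_comp_prodMk_eq_deriv_smul_add (hpx.differentiableAt two_ne_zero) hρx hθx
  have hθG := apply_mul_comm_of_add_smul_eq_smul (hpθ x hx) hρG (hchain.symm.trans (hdF x hx))
  exact ⟨crossProduct_grad3_eq_zero hρG, crossProduct_grad3_eq_zero hθG⟩
end

section
/- Let Ω ⊆ ℝ³ be open, let r : Ω → (0,∞) be C¹, let U : Ω → ℝ³ be a C¹ vector field, and let φ : (0,∞) → ℝ be C¹ with φ'(z) < 0 for all z > 0. Assume div(r U) = 0 and div(r φ(r) U) = 0 pointwise on Ω. Then ∇r(x) · U(x) = 0 for every x ∈ Ω. If moreover r(x) = r₀(x₃) for a C¹ function r₀ : ℝ → (0,∞) with r₀'(x₃) ≠ 0 for all relevant x₃, then the vertical component satisfies U₃ ≡ 0 on Ω, and consequently div_h U_h := ∂₁U₁ + ∂₂U₂ = 0 on Ω. -/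
open Set

/-- The divergence of a vector field on `ℝ³`. -/
noncomputable def div3 (V : (Fin 3 → ℝ) → (Fin 3 → ℝ)) (x : Fin 3 → ℝ) : ℝ :=
  ∑ i, fderiv ℝ (fun y => V y i) x (Pi.single i 1)

open Filter Topology

/-!
Write `G = ∇r · U`. The product rule gives `div (r U) = r div U + G`, and since
`r φ(r) U = φ(r) (r U)`, also `div (r φ(r) U) = φ(r) div (r U) + r φ'(r) G`. Both divergences
vanish, so `r φ'(r) G = 0`, whence `G = 0` because `r > 0` and `φ' < 0`. If `r = r₀(x₃)`, then
`G = r₀'(x₃) U₃`, so `U₃ = 0`; then `div U = G / r = 0`, and `∂₃U₃ = 0` because `U₃` vanishes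
on the open set `Ω`.
-/

section VectorCalculus

variable {f : (Fin 3 → ℝ) → ℝ} {V : (Fin 3 → ℝ) → (Fin 3 → ℝ)} {x : Fin 3 → ℝ}

theorem Filter.EventuallyEq.grad3_eq {g : (Fin 3 → ℝ) → ℝ} (h : f =ᶠ[𝓝 x] g) :
    grad3 f x = grad3 g x := by
  unfold grad3
  rw [h.fderiv_eq]

theorem grad3_comp {h : ℝ → ℝ} {h' : ℝ} (hh : HasDerivAt h h' (f x))
    (hf : DifferentiableAt ℝ f x) : grad3 (fun y => h (f y)) x = h' • grad3 f x := by
  have hcomp : HasFDerivAt (fun y => h (f y)) (h' • fderiv ℝ f x) x :=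
    hh.comp_hasFDerivAt x hf.hasFDerivAt
  ext i
  simp [grad3, hcomp.fderiv]

theorem grad3_apply_coord {h : ℝ → ℝ} (j : Fin 3) (hh : DifferentiableAt ℝ h (x j)) :
    grad3 (fun y => h (y j)) x = Pi.single j (deriv h (x j)) := by
  have hcomp : HasFDerivAt (fun y => h (y j))
      (deriv h (x j) • ContinuousLinearMap.proj (R := ℝ) (φ := fun _ : Fin 3 => ℝ) j) x :=
    hh.hasDerivAt.comp_hasFDerivAt x (hasFDerivAt_apply j x)
  ext i
  simp [grad3, hcomp.fderiv, Pi.single_apply, eq_comm]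

theorem div3_smul (hf : DifferentiableAt ℝ f x)
    (hV : ∀ i, DifferentiableAt ℝ (fun y => V y i) x) :
    div3 (fun y => f y • V y) x = f x * div3 V x + ∑ i, grad3 f x i * V x i := by
  simp only [div3, grad3, Pi.smul_apply, smul_eq_mul, Finset.mul_sum, ← Finset.sum_add_distrib]
  refine Finset.sum_congr rfl fun i _ => ?_
  rw [fderiv_fun_mul hf (hV i)]
  simp only [add_apply, smul_apply, smul_eq_mul]
  ring

theorem div3_eq_of_apply_two_eventuallyEq_zero (hV : (fun y => V y 2) =ᶠ[𝓝 x] 0) :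
    div3 V x = fderiv ℝ (fun y => V y 0) x (Pi.single 0 1)
      + fderiv ℝ (fun y => V y 1) x (Pi.single 1 1) := by
  rw [div3, Fin.sum_univ_three, hV.fderiv_eq]
  simp

end VectorCalculus

section Layering

variable {r : (Fin 3 → ℝ) → ℝ} {U : (Fin 3 → ℝ) → (Fin 3 → ℝ)} {x : Fin 3 → ℝ}

theorem grad3_dot_eq_zero_of_div3_eq_zero {φ : ℝ → ℝ} {φ' : ℝ}
    (hr : DifferentiableAt ℝ r x) (hU : ∀ i, DifferentiableAt ℝ (fun y => U y i) x)
    (hφ : HasDerivAt φ φ' (r x)) (hφ' : φ' ≠ 0) (hrx : r x ≠ 0)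
    (hdiv1 : div3 (fun y => r y • U y) x = 0)
    (hdiv2 : div3 (fun y => (r y * φ (r y)) • U y) x = 0) :
    ∑ i, grad3 r x i * U x i = 0 := by
  have hsplit : (fun y => (r y * φ (r y)) • U y) = fun y => φ (r y) • (r y • U y) := by
    funext y
    rw [smul_smul, mul_comm]
  have hrU : ∀ i, DifferentiableAt ℝ (fun y => (r y • U y) i) x := fun i => hr.mul (hU i)
  rw [hsplit, div3_smul (f := fun y => φ (r y)) (hφ.differentiableAt.comp x hr) hrU, hdiv1, grad3_comp hφ hr] at hdiv2
  simp only [Pi.smul_apply, smul_eq_mul, mul_zero, zero_add] at hdiv2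
  have hfactor : φ' * r x * ∑ i, grad3 r x i * U x i = 0 := by
    rw [← hdiv2, Finset.mul_sum]
    exact Finset.sum_congr rfl fun i _ => by ring
  exact (mul_eq_zero.1 hfactor).resolve_left (mul_ne_zero hφ' hrx)

theorem apply_eq_zero_of_grad3_dot_eq_zero {r₀ : ℝ → ℝ} {j : Fin 3}
    (hrr₀ : r =ᶠ[𝓝 x] fun y => r₀ (y j)) (hr₀ : DifferentiableAt ℝ r₀ (x j))
    (hr₀' : deriv r₀ (x j) ≠ 0) (hdot : ∑ i, grad3 r x i * U x i = 0) :
    U x j = 0 := by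
  rw [hrr₀.grad3_eq, grad3_apply_coord j hr₀] at hdot
  simpa [Pi.single_apply, hr₀'] using hdot

theorem div3_eq_zero_of_grad3_dot_eq_zero (hr : DifferentiableAt ℝ r x)
    (hU : ∀ i, DifferentiableAt ℝ (fun y => U y i) x) (hrx : r x ≠ 0)
    (hdiv : div3 (fun y => r y • U y) x = 0) (hdot : ∑ i, grad3 r x i * U x i = 0) :
    div3 U x = 0 := by
  rw [div3_smul hr hU, hdot, add_zero] at hdiv
  exact (mul_eq_zero.1 hdiv).resolve_left hrx

end Layering

/-- if `div(r U) = 0` and `div(r φ(r) U) = 0` on an open set `Ω`,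
with `r > 0` of class `C¹` and `φ' < 0` on `(0,∞)`, then `∇r · U = 0` on `Ω`;
if moreover `r(x) = r₀(x₃)` with `r₀' ≠ 0` at all relevant points, then
`U₃ ≡ 0` and `div_h U_h = ∂₁U₁ + ∂₂U₂ = 0` on `Ω`. -/
theorem stmt_3 (Ω : Set (Fin 3 → ℝ)) (hΩ : IsOpen Ω)
    (r : (Fin 3 → ℝ) → ℝ) (U : (Fin 3 → ℝ) → (Fin 3 → ℝ)) (φ : ℝ → ℝ)
    (hr : ContDiffOn ℝ 1 r Ω) (hU : ContDiffOn ℝ 1 U Ω)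
    (hrpos : ∀ x ∈ Ω, 0 < r x)
    (hφ : ContDiffOn ℝ 1 φ (Ioi 0))
    (hφ' : ∀ z : ℝ, 0 < z → deriv φ z < 0)
    (hdiv1 : ∀ x ∈ Ω, div3 (fun y => r y • U y) x = 0)
    (hdiv2 : ∀ x ∈ Ω, div3 (fun y => (r y * φ (r y)) • U y) x = 0) :
    (∀ x ∈ Ω, (∑ i, grad3 r x i * U x i) = 0) ∧
    (∀ r₀ : ℝ → ℝ, ContDiff ℝ 1 r₀ → (∀ t : ℝ, 0 < r₀ t) →
      (∀ x ∈ Ω, r x = r₀ (x 2)) →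
      (∀ x ∈ Ω, deriv r₀ (x 2) ≠ 0) →
      ∀ x ∈ Ω, U x 2 = 0 ∧
        fderiv ℝ (fun y => U y 0) x (Pi.single 0 1)
          + fderiv ℝ (fun y => U y 1) x (Pi.single 1 1) = 0) := by
  have hrd : ∀ x ∈ Ω, DifferentiableAt ℝ r x := fun x hx =>
    (hr.contDiffAt (hΩ.mem_nhds hx)).differentiableAt one_ne_zero
  have hUd : ∀ x ∈ Ω, ∀ i, DifferentiableAt ℝ (fun y => U y i) x := fun x hx =>
    differentiableAt_pi.1 ((hU.contDiffAt (hΩ.mem_nhds hx)).differentiableAt one_ne_zero)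
  have hdot : ∀ x ∈ Ω, ∑ i, grad3 r x i * U x i = 0 := fun x hx =>
    have hφx : HasDerivAt φ (deriv φ (r x)) (r x) :=
      ((hφ.contDiffAt (Ioi_mem_nhds (hrpos x hx))).differentiableAt one_ne_zero).hasDerivAt
    grad3_dot_eq_zero_of_div3_eq_zero (hrd x hx) (hUd x hx) hφx (hφ' _ (hrpos x hx)).ne
      (hrpos x hx).ne' (hdiv1 x hx) (hdiv2 x hx)
  refine ⟨hdot, fun r₀ hr₀ _ hrr₀ hr₀' => ?_⟩
  have hU₃ : ∀ x ∈ Ω, U x 2 = 0 := fun x hx =>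
    apply_eq_zero_of_grad3_dot_eq_zero (eventuallyEq_of_mem (hΩ.mem_nhds hx) hrr₀)
      (hr₀.differentiable one_ne_zero _) (hr₀' x hx) (hdot x hx)
  intro x hx
  refine ⟨hU₃ x hx, ?_⟩
  rw [← div3_eq_of_apply_two_eventuallyEq_zero (eventuallyEq_of_mem (hΩ.mem_nhds hx) hU₃)]
  exact div3_eq_zero_of_grad3_dot_eq_zero (hrd x hx) (hUd x hx) (hrpos x hx).ne' (hdiv1 x hx)
    (hdot x hx)
end

section
/- Let p, e : (0,∞)² → ℝ be C¹ functions of (ρ, θ) satisfying the monoatomic gas relation p(ρ,θ) = (2/3) ρ e(ρ,θ) and the Maxwell (Gibbs compatibility) relation ρ² ∂e/∂ρ(ρ,θ) = p(ρ,θ) − θ ∂p/∂θ(ρ,θ) for all ρ, θ > 0. Then p has the scaling form p(ρ,θ) = θ^{5/2} P(ρ θ^{−3/2}) for all ρ, θ > 0, where P : (0,∞) → ℝ is defined by P(Z) = p(Z, 1). Equivalently, p satisfies the Euler-type PDE (3/2) ρ ∂p/∂ρ + θ ∂p/∂θ = (5/2) p on (0,∞)². -/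
/-!
Writing `e = 3p/(2ρ)`, the Maxwell relation becomes the Euler equation
`(3/2) ρ ∂ρp + θ ∂θp = (5/2) p`. Along each curve `ρ = c θ^{3/2}` this says exactly that
`θ^{-5/2} p` has zero derivative, so it equals its value at `θ = 1`, namely `p(c, 1)`.
-/

open Set

section PartialDerivatives

variable {f : ℝ → ℝ → ℝ}

theorem hasDerivAt_partial_fst {x y : ℝ}
    (hf : DifferentiableAt ℝ (fun q : ℝ × ℝ => f q.1 q.2) (x, y)) :
    HasDerivAt (fun a => f a y) (fderiv ℝ (fun q : ℝ × ℝ => f q.1 q.2) (x, y) (1, 0)) x :=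
  (hf.hasFDerivAt.comp_hasDerivAt x ((hasDerivAt_id' x).prodMk (hasDerivAt_const x y)) :)

theorem hasDerivAt_partial_snd {x y : ℝ}
    (hf : DifferentiableAt ℝ (fun q : ℝ × ℝ => f q.1 q.2) (x, y)) :
    HasDerivAt (fun b => f x b) (fderiv ℝ (fun q : ℝ × ℝ => f q.1 q.2) (x, y) (0, 1)) y :=
  (hf.hasFDerivAt.comp_hasDerivAt y ((hasDerivAt_const y x).prodMk (hasDerivAt_id' y)) :)

theorem hasDerivAt_comp_curve {u v : ℝ → ℝ} {u' v' t : ℝ}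
    (hf : DifferentiableAt ℝ (fun q : ℝ × ℝ => f q.1 q.2) (u t, v t))
    (hu : HasDerivAt u u' t) (hv : HasDerivAt v v' t) :
    HasDerivAt (fun s => f (u s) (v s))
      (u' * deriv (fun a => f a (v t)) (u t) + v' * deriv (fun b => f (u t) b) (v t)) t := by
  have hcomp := hf.hasFDerivAt.comp_hasDerivAt t (hu.prodMk hv)
  have hsplit : ((u', v') : ℝ × ℝ) = u' • ((1 : ℝ), (0 : ℝ)) + v' • ((0 : ℝ), (1 : ℝ)) := by
    simp
  rw [hsplit, map_add, map_smul, map_smul] at hcomp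
  rwa [(hasDerivAt_partial_fst hf).deriv, (hasDerivAt_partial_snd hf).deriv]

end PartialDerivatives

theorem eq_rpow_mul_of_weighted_euler {F : ℝ → ℝ → ℝ} {α β : ℝ}
    (hF : DifferentiableOn ℝ (fun q : ℝ × ℝ => F q.1 q.2) (Ioi 0 ×ˢ Ioi 0))
    (heuler : ∀ x y : ℝ, 0 < x → 0 < y →
      α * x * deriv (fun a => F a y) x + y * deriv (fun b => F x b) y = β * F x y)
    {x y : ℝ} (hx : 0 < x) (hy : 0 < y) :
    F x y = y ^ β * F (x * y ^ (-α)) 1 := by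
  set c := x * y ^ (-α)
  have hc : 0 < c := mul_pos hx (Real.rpow_pos_of_pos hy _)
  let g : ℝ → ℝ := fun t => t ^ (-β) * F (c * t ^ α) t
  have hg : ∀ t ∈ Ioi (0 : ℝ), HasDerivAt g 0 t := by
    intro t (ht : 0 < t)
    have hxt : 0 < c * t ^ α := mul_pos hc (Real.rpow_pos_of_pos ht _)
    have hFt : DifferentiableAt ℝ (fun q : ℝ × ℝ => F q.1 q.2) (c * t ^ α, t) :=
      hF.differentiableAt ((isOpen_Ioi.prod isOpen_Ioi).mem_nhds ⟨hxt, ht⟩)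
    have hcurve := hasDerivAt_comp_curve hFt
      ((Real.hasDerivAt_rpow_const (p := α) (Or.inl ht.ne')).const_mul c) (hasDerivAt_id' t)
    refine ((Real.hasDerivAt_rpow_const (p := -β) (Or.inl ht.ne')).mul hcurve).congr_deriv ?_
    have hE := heuler _ _ hxt ht
    rw [Real.rpow_sub_one ht.ne', Real.rpow_sub_one ht.ne']
    field_simp
    linear_combination t ^ (-β) * hE
  have hconst : g y = g 1 :=
    isOpen_Ioi.is_const_of_deriv_eq_zero isPreconnected_Ioi
      (fun t ht => (hg t ht).differentiableAt.differentiableWithinAt)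
      (fun t ht => (hg t ht).deriv) hy (mem_Ioi.2 one_pos)
  have hcy : c * y ^ α = x := by
    rw [mul_assoc, ← Real.rpow_add hy, neg_add_cancel, Real.rpow_zero, mul_one]
  simp only [g, hcy, Real.one_rpow, one_mul, mul_one] at hconst
  rw [← hconst, ← mul_assoc, ← Real.rpow_add hy, add_neg_cancel, Real.rpow_zero, one_mul]

theorem monoatomic_maxwell_euler {p e : ℝ → ℝ → ℝ} {ρ θ : ℝ} (hρ : 0 < ρ)
    (hpρ : DifferentiableAt ℝ (fun a => p a θ) ρ)
    (hmono : ∀ a, 0 < a → p a θ = 2 / 3 * a * e a θ)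
    (hmax : ρ ^ 2 * deriv (fun a => e a θ) ρ = p ρ θ - θ * deriv (fun b => p ρ b) θ) :
    3 / 2 * ρ * deriv (fun a => p a θ) ρ + θ * deriv (fun b => p ρ b) θ = 5 / 2 * p ρ θ := by
  have he_eq : (fun a => e a θ) =ᶠ[nhds ρ] fun a => 3 / 2 * p a θ / a := by
    filter_upwards [isOpen_Ioi.mem_nhds hρ] with a (ha : 0 < a)
    rw [hmono a ha]
    field_simp
  have he_deriv := ((hpρ.hasDerivAt.const_mul (3 / 2)).div (hasDerivAt_id ρ)
    hρ.ne').congr_of_eventuallyEq he_eq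
  rw [he_deriv.deriv] at hmax
  simp only [id] at hmax
  field_simp at hmax
  linarith

theorem stmt_4_general (p e : ℝ → ℝ → ℝ)
    (hp : ContDiffOn ℝ 1 (fun q : ℝ × ℝ => p q.1 q.2) (Ioi (0:ℝ) ×ˢ Ioi (0:ℝ)))
    (hmono : ∀ ρ θ : ℝ, 0 < ρ → 0 < θ → p ρ θ = 2/3 * ρ * e ρ θ)
    (hmax : ∀ ρ θ : ℝ, 0 < ρ → 0 < θ →
      ρ^2 * deriv (fun a => e a θ) ρ = p ρ θ - θ * deriv (fun b => p ρ b) θ) :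
    (∀ ρ θ : ℝ, 0 < ρ → 0 < θ →
      p ρ θ = θ ^ ((5:ℝ)/2) * p (ρ * θ ^ (-(3:ℝ)/2)) 1) ∧
    (∀ ρ θ : ℝ, 0 < ρ → 0 < θ →
      3/2 * ρ * deriv (fun a => p a θ) ρ + θ * deriv (fun b => p ρ b) θ
        = 5/2 * p ρ θ) := by
  have hdiff := hp.differentiableOn one_ne_zero
  have heuler : ∀ ρ θ : ℝ, 0 < ρ → 0 < θ →
      3/2 * ρ * deriv (fun a => p a θ) ρ + θ * deriv (fun b => p ρ b) θ = 5/2 * p ρ θ :=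
    fun ρ θ hρ hθ => monoatomic_maxwell_euler hρ
      (hasDerivAt_partial_fst (hdiff.differentiableAt
        ((isOpen_Ioi.prod isOpen_Ioi).mem_nhds ⟨hρ, hθ⟩))).differentiableAt
      (fun a ha => hmono a θ ha hθ) (hmax ρ θ hρ hθ)
  refine ⟨fun ρ θ hρ hθ => ?_, heuler⟩
  rw [neg_div]
  exact eq_rpow_mul_of_weighted_euler hdiff heuler hρ hθ

/-- a `C¹` pressure/energy pair satisfying the monoatomic relation
`p = (2/3) ρ e` and the Maxwell relation `ρ² ∂e/∂ρ = p − θ ∂p/∂θ` has the scaling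
form `p(ρ,θ) = θ^{5/2} P(ρ θ^{−3/2})` with `P(Z) = p(Z,1)`; equivalently, `p`
satisfies the Euler-type PDE `(3/2) ρ ∂p/∂ρ + θ ∂p/∂θ = (5/2) p` on `(0,∞)²`. -/
theorem stmt_4 (p e : ℝ → ℝ → ℝ)
    (hp : ContDiffOn ℝ 1 (fun q : ℝ × ℝ => p q.1 q.2) (Ioi (0:ℝ) ×ˢ Ioi (0:ℝ)))
    (he : ContDiffOn ℝ 1 (fun q : ℝ × ℝ => e q.1 q.2) (Ioi (0:ℝ) ×ˢ Ioi (0:ℝ)))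
    (hmono : ∀ ρ θ : ℝ, 0 < ρ → 0 < θ → p ρ θ = 2/3 * ρ * e ρ θ)
    (hmax : ∀ ρ θ : ℝ, 0 < ρ → 0 < θ →
      ρ^2 * deriv (fun a => e a θ) ρ = p ρ θ - θ * deriv (fun b => p ρ b) θ) :
    (∀ ρ θ : ℝ, 0 < ρ → 0 < θ →
      p ρ θ = θ ^ ((5:ℝ)/2) * p (ρ * θ ^ (-(3:ℝ)/2)) 1) ∧
    (∀ ρ θ : ℝ, 0 < ρ → 0 < θ →
      3/2 * ρ * deriv (fun a => p a θ) ρ + θ * deriv (fun b => p ρ b) θ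
        = 5/2 * p ρ θ) :=
  stmt_4_general p e hp hmono hmax
end

section
/- Let a > 0 and let P : [0,∞) → ℝ be C¹ with P(0) = 0, P'(Z) > 0 for all Z ≥ 0, (5/3) P(Z) − P'(Z) Z > 0 for all Z > 0, and P(Z)/Z^{5/3} → p_∞ > 0 as Z → ∞. Define e(ρ,θ) = (3/2) (θ^{5/2}/ρ) P(ρ θ^{−3/2}) + (a/ρ) θ⁴ for ρ, θ > 0. Then there exist constants c₁, c₂ > 0 such that c₁ (ρ^{5/3} + θ⁴) ≤ ρ e(ρ,θ) ≤ c₂ (1 + ρ^{5/3} + θ⁴) for all ρ, θ > 0. -/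
/-!
With `Z = ρ θ^{-3/2}` one has `ρ e = (3/2) θ^{5/2} P(Z) + a θ⁴` and `θ^{5/2} Z^{5/3} = ρ^{5/3}`,
so, since `θ^{5/2} ≤ 1 + θ⁴`, it suffices to show `c Z^{5/3} ≤ P(Z) ≤ C (1 + Z^{5/3})` for `Z > 0`.
On `[0, 1]`, the mean value theorem gives `P(Z) ≥ (min_{[0,1]} P') Z ≥ (min_{[0,1]} P') Z^{5/3}`,
and `P(Z) ≤ P(1)` by monotonicity. On `[1, ∞)`, `P(Z) / Z^{5/3}` is continuous, positive and
tends to `p_∞ > 0`, hence is bounded above and away from zero.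
-/

open Set

/-- Internal energy of a monoatomic gas with radiation:
`e(ρ,θ) = (3/2)(θ^{5/2}/ρ) P(ρ θ^{−3/2}) + (a/ρ) θ⁴`. -/
noncomputable def eGas (a : ℝ) (P : ℝ → ℝ) (ρ θ : ℝ) : ℝ :=
  3/2 * (θ ^ ((5:ℝ)/2) / ρ) * P (ρ * θ ^ (-(3:ℝ)/2)) + a/ρ * θ^4

open Filter Topology

lemma ContinuousOn.exists_forall_le_of_tendsto_atTop {g : ℝ → ℝ} {b L : ℝ}
    (hg : ContinuousOn g (Ici b)) (hlim : Tendsto g atTop (𝓝 L)) :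
    ∃ M, ∀ x ∈ Ici b, g x ≤ M := by
  obtain ⟨A, hA⟩ := eventually_atTop.1 (hlim.eventually_le_const (lt_add_one L))
  obtain ⟨M₀, hM₀⟩ :=
    isCompact_Icc.bddAbove_image (hg.mono (Icc_subset_Ici_self : Icc b A ⊆ Ici b))
  refine ⟨max M₀ (L + 1), fun x hx => ?_⟩
  rcases le_total x A with hxA | hAx
  · exact (hM₀ ⟨x, ⟨hx, hxA⟩, rfl⟩).trans (le_max_left _ _)
  · exact (hA x hAx).trans (le_max_right _ _)

lemma ContinuousOn.exists_pos_forall_le_of_tendsto_atTop {g : ℝ → ℝ} {b L : ℝ}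
    (hg : ContinuousOn g (Ici b)) (hpos : ∀ x ∈ Ici b, 0 < g x) (hL : 0 < L)
    (hlim : Tendsto g atTop (𝓝 L)) :
    ∃ c, 0 < c ∧ ∀ x ∈ Ici b, c ≤ g x := by
  obtain ⟨M, hM⟩ := (hg.inv₀ fun x hx => (hpos x hx).ne').exists_forall_le_of_tendsto_atTop
    (hlim.inv₀ hL.ne')
  have hMpos : 0 < M := (inv_pos.2 (hpos b self_mem_Ici)).trans_le (hM b self_mem_Ici)
  refine ⟨M⁻¹, inv_pos.2 hMpos, fun x hx => ?_⟩
  exact (inv_le_comm₀ (hpos x hx) hMpos).1 (hM x hx)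

lemma Real.rpow_le_one_add_pow {x p : ℝ} {n : ℕ} (hx : 0 ≤ x) (hp : 0 ≤ p) (hpn : p ≤ n) :
    x ^ p ≤ 1 + x ^ n := by
  rcases le_total x 1 with hx1 | hx1
  · linarith [Real.rpow_le_one hx hx1 hp, pow_nonneg hx n]
  · rw [← Real.rpow_natCast]
    linarith [Real.rpow_le_rpow_of_exponent_le hx1 hpn]

section Pressure

variable {P : ℝ → ℝ} (hP : ContDiffOn ℝ 1 P (Ici 0))
include hP

lemma hasDerivAt_derivWithin_Ici {x : ℝ} (hx : 0 < x) :
    HasDerivAt P (derivWithin P (Ici 0) x) x := by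
  have hn : Ici (0:ℝ) ∈ 𝓝 x := Ici_mem_nhds hx
  rw [derivWithin_of_mem_nhds hn]
  exact ((hP.differentiableOn one_ne_zero).differentiableAt hn).hasDerivAt

lemma continuousOn_div_rpow_Ici_one {p : ℝ} : ContinuousOn (fun Z => P Z / Z ^ p) (Ici 1) :=
  (hP.continuousOn.mono fun _ hx => zero_le_one.trans hx).div
    (continuousOn_id.rpow_const fun _ hx => Or.inl (zero_lt_one.trans_le hx).ne')
    fun _ hx => (Real.rpow_pos_of_pos (zero_lt_one.trans_le hx) _).ne'

variable (hP' : ∀ Z, 0 ≤ Z → 0 < derivWithin P (Ici 0) Z)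
include hP'

lemma strictMonoOn_Ici_of_derivWithin_pos : StrictMonoOn P (Ici 0) := by
  refine strictMonoOn_of_deriv_pos (convex_Ici 0) hP.continuousOn fun x hx => ?_
  rw [interior_Ici] at hx
  rw [(hasDerivAt_derivWithin_Ici hP hx).deriv]
  exact hP' x hx.le

lemma exists_pos_mul_le_of_derivWithin_pos (hP0 : P 0 = 0) :
    ∃ m, 0 < m ∧ ∀ Z ∈ Icc (0:ℝ) 1, m * Z ≤ P Z := by
  have hd : ContinuousOn (derivWithin P (Ici 0)) (Icc 0 1) :=
    (hP.continuousOn_derivWithin (uniqueDiffOn_Ici 0) le_rfl).mono Icc_subset_Ici_self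
  obtain ⟨x₀, hx₀, hmin⟩ := isCompact_Icc.exists_isMinOn (nonempty_Icc.2 zero_le_one) hd
  refine ⟨_, hP' x₀ hx₀.1, fun Z hZ => ?_⟩
  have hmvt := (convex_Icc (0:ℝ) 1).mul_sub_le_image_sub_of_le_deriv
    (hP.continuousOn.mono Icc_subset_Ici_self)
    (fun x hx => by
      rw [interior_Icc] at hx
      exact (hasDerivAt_derivWithin_Ici hP hx.1).differentiableAt.differentiableWithinAt)
    (fun x hx => by
      rw [interior_Icc] at hx
      rw [(hasDerivAt_derivWithin_Ici hP hx.1).deriv]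
      exact hmin (Ioo_subset_Icc_self hx))
    0 (left_mem_Icc.2 zero_le_one) Z hZ hZ.1
  simpa [hP0] using hmvt

variable {p pinf : ℝ} (hlim : Tendsto (fun Z => P Z / Z ^ p) atTop (𝓝 pinf))
include hlim

lemma exists_pos_mul_rpow_le (hpinf : 0 < pinf) (hp : 1 ≤ p) (hP0 : P 0 = 0) :
    ∃ c, 0 < c ∧ ∀ Z, 0 < Z → c * Z ^ p ≤ P Z := by
  obtain ⟨m, hm, hmZ⟩ := exists_pos_mul_le_of_derivWithin_pos hP hP' hP0
  have hPpos : ∀ Z ∈ Ici (1:ℝ), 0 < P Z / Z ^ p := by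
    intro Z hZ
    have hZ0 : (0:ℝ) < Z := zero_lt_one.trans_le hZ
    have hPZ := strictMonoOn_Ici_of_derivWithin_pos hP hP' self_mem_Ici hZ0.le hZ0
    rw [hP0] at hPZ
    exact div_pos hPZ (Real.rpow_pos_of_pos hZ0 _)
  obtain ⟨c, hc, hcZ⟩ := (continuousOn_div_rpow_Ici_one hP).exists_pos_forall_le_of_tendsto_atTop
    hPpos hpinf hlim
  refine ⟨min m c, lt_min hm hc, fun Z hZ => ?_⟩
  rcases le_total Z 1 with hZ1 | hZ1
  · calc min m c * Z ^ p ≤ m * Z := by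
          gcongr
          · exact min_le_left _ _
          · simpa using Real.rpow_le_rpow_of_exponent_ge hZ hZ1 hp
      _ ≤ P Z := hmZ Z ⟨hZ.le, hZ1⟩
  · have hZp : 0 < Z ^ p := Real.rpow_pos_of_pos hZ _
    calc min m c * Z ^ p ≤ c * Z ^ p := by gcongr; exact min_le_right _ _
      _ ≤ P Z := (le_div_iff₀ hZp).1 (hcZ Z hZ1)

lemma exists_le_mul_one_add_rpow : ∃ C, 0 ≤ C ∧ ∀ Z, 0 < Z → P Z ≤ C * (1 + Z ^ p) := by
  obtain ⟨M, hM⟩ := (continuousOn_div_rpow_Ici_one hP).exists_forall_le_of_tendsto_atTop hlim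
  refine ⟨max (max (P 1) M) 0, le_max_right _ _, fun Z hZ => ?_⟩
  have hZp : 0 < Z ^ p := Real.rpow_pos_of_pos hZ _
  have hC₁ : P 1 ≤ max (max (P 1) M) 0 := (le_max_left _ _).trans (le_max_left _ _)
  have hC₂ : M ≤ max (max (P 1) M) 0 := (le_max_right _ _).trans (le_max_left _ _)
  have hC₀ : 0 ≤ max (max (P 1) M) 0 := le_max_right _ _
  rcases le_total Z 1 with hZ1 | hZ1
  · have := (strictMonoOn_Ici_of_derivWithin_pos hP hP').monotoneOn hZ.le
      (mem_Ici.2 zero_le_one) hZ1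
    nlinarith
  · have := (div_le_iff₀ hZp).1 (hM Z hZ1)
    nlinarith

end Pressure

lemma mul_eGas (a : ℝ) (P : ℝ → ℝ) {ρ : ℝ} (θ : ℝ) (hρ : ρ ≠ 0) :
    ρ * eGas a P ρ θ = 3/2 * θ ^ ((5:ℝ)/2) * P (ρ * θ ^ (-(3:ℝ)/2)) + a * θ ^ 4 := by
  unfold eGas
  field_simp

lemma rpow_five_halves_mul_rpow_five_thirds {ρ θ : ℝ} (hρ : 0 ≤ ρ) (hθ : 0 < θ) :
    θ ^ ((5:ℝ)/2) * (ρ * θ ^ (-(3:ℝ)/2)) ^ ((5:ℝ)/3) = ρ ^ ((5:ℝ)/3) := by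
  rw [Real.mul_rpow hρ (Real.rpow_nonneg hθ.le _), ← Real.rpow_mul hθ.le, mul_left_comm,
    ← Real.rpow_add hθ]
  norm_num

theorem stmt_8_general (a : ℝ) (ha : 0 < a) (P : ℝ → ℝ) (pinf : ℝ) (hpinf : 0 < pinf)
    (hP : ContDiffOn ℝ 1 P (Ici 0)) (hP0 : P 0 = 0)
    (hP' : ∀ Z : ℝ, 0 ≤ Z → 0 < derivWithin P (Ici 0) Z)
    (hlim : Filter.Tendsto (fun Z => P Z / Z ^ ((5:ℝ)/3)) Filter.atTop (nhds pinf)) :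
    ∃ c₁ : ℝ, 0 < c₁ ∧ ∃ c₂ : ℝ, 0 < c₂ ∧
      ∀ ρ θ : ℝ, 0 < ρ → 0 < θ →
        c₁ * (ρ ^ ((5:ℝ)/3) + θ^4) ≤ ρ * eGas a P ρ θ ∧
        ρ * eGas a P ρ θ ≤ c₂ * (1 + ρ ^ ((5:ℝ)/3) + θ^4) := by
  obtain ⟨c, hc, hcP⟩ := exists_pos_mul_rpow_le hP hP' hlim hpinf (by norm_num) hP0
  obtain ⟨C, hC, hCP⟩ := exists_le_mul_one_add_rpow hP hP' hlim
  refine ⟨min (3/2 * c) a, lt_min (by positivity) ha, 3/2 * C + a, by positivity,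
    fun ρ θ hρ hθ => ?_⟩
  rw [mul_eGas a P θ hρ.ne']
  set Z := ρ * θ ^ (-(3:ℝ)/2)
  have hZ : 0 < Z := mul_pos hρ (Real.rpow_pos_of_pos hθ _)
  have hθ52 : 0 ≤ θ ^ ((5:ℝ)/2) := Real.rpow_nonneg hθ.le _
  have hscale : θ ^ ((5:ℝ)/2) * Z ^ ((5:ℝ)/3) = ρ ^ ((5:ℝ)/3) :=
    rpow_five_halves_mul_rpow_five_thirds hρ.le hθ
  have hlow : c * ρ ^ ((5:ℝ)/3) ≤ θ ^ ((5:ℝ)/2) * P Z := by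
    rw [← hscale]
    linarith [mul_le_mul_of_nonneg_left (hcP Z hZ) hθ52]
  have hup : θ ^ ((5:ℝ)/2) * P Z ≤ C * (1 + ρ ^ ((5:ℝ)/3) + θ ^ 4) := by
    have hθ4 : θ ^ ((5:ℝ)/2) ≤ 1 + θ ^ 4 :=
      Real.rpow_le_one_add_pow hθ.le (by norm_num) (by norm_num)
    rw [← hscale]
    linarith [mul_le_mul_of_nonneg_left (hCP Z hZ) hθ52, mul_le_mul_of_nonneg_left hθ4 hC]
  have hρ53 : 0 ≤ ρ ^ ((5:ℝ)/3) := Real.rpow_nonneg hρ.le _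
  have hθ4 : 0 ≤ θ ^ 4 := by positivity
  constructor
  · linarith [mul_le_mul_of_nonneg_right (min_le_left (3/2 * c) a) hρ53,
      mul_le_mul_of_nonneg_right (min_le_right (3/2 * c) a) hθ4]
  · nlinarith

/-- under the structural hypotheses on `P` (thermodynamic stability
and `P(Z)/Z^{5/3} → p_∞ > 0`), the total energy satisfies the two-sided bound
`c₁ (ρ^{5/3} + θ⁴) ≤ ρ e(ρ,θ) ≤ c₂ (1 + ρ^{5/3} + θ⁴)` on `(0,∞)²`. -/
theorem stmt_8 (a : ℝ) (ha : 0 < a) (P : ℝ → ℝ) (pinf : ℝ) (hpinf : 0 < pinf)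
    (hP : ContDiffOn ℝ 1 P (Ici 0)) (hP0 : P 0 = 0)
    (hP' : ∀ Z : ℝ, 0 ≤ Z → 0 < derivWithin P (Ici 0) Z)
    (hstab : ∀ Z : ℝ, 0 < Z → 0 < 5/3 * P Z - derivWithin P (Ici 0) Z * Z)
    (hlim : Filter.Tendsto (fun Z => P Z / Z ^ ((5:ℝ)/3)) Filter.atTop (nhds pinf)) :
    ∃ c₁ : ℝ, 0 < c₁ ∧ ∃ c₂ : ℝ, 0 < c₂ ∧
      ∀ ρ θ : ℝ, 0 < ρ → 0 < θ →
        c₁ * (ρ ^ ((5:ℝ)/3) + θ^4) ≤ ρ * eGas a P ρ θ ∧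
        ρ * eGas a P ρ θ ≤ c₂ * (1 + ρ ^ ((5:ℝ)/3) + θ^4) :=
  stmt_8_general a ha P pinf hpinf hP hP0 hP' hlim
end

section
/- Let c > 0 and let P : (0,∞) → ℝ, 𝒮 : (0,∞) → ℝ be C¹ with 𝒮'(Z) = −(3/2) ((5/3) P(Z) − P'(Z) Z)/Z², where 0 < (5/3) P(Z) − P'(Z) Z ≤ c Z for all Z > 0, and suppose 𝒮(Z) → 0 as Z → ∞. Define the molecular entropy s_m(ρ,θ) = 𝒮(ρ θ^{−3/2}) for ρ, θ > 0. Then s_m(ρ,θ) > 0 for all ρ, θ > 0, and there exists a constant C > 0 such that s_m(ρ,θ) ≤ C (1 + |log ρ| + max(log θ, 0)) for all ρ, θ > 0. -/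
open Set Filter Real

/-
Along the ray `Z = ρ θ^{-3/2}` everything reduces to one-variable facts about `𝒮`. Since
`𝒮' < 0`, `𝒮` is strictly decreasing, so the Third law `𝒮(∞) = 0` forces `𝒮 > 0`. The upper
stability bound gives `𝒮'(Z) ≥ -(3/2) c / Z`, i.e. `𝒮 + (3/2) c log` is nondecreasing; hence
`𝒮` grows at most like `(3/2) c |log Z|` as `Z → 0`, and
`-log Z = -log ρ + (3/2) log θ` is controlled by `|log ρ| + (3/2) max (log θ) 0`.
-/

theorem StrictAntiOn.lt_of_tendsto_atTop {α β : Type*} [LinearOrder α] [NoMaxOrder α]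
    [LinearOrder β] [TopologicalSpace β] [OrderClosedTopology β] {f : α → β} {a : α} {b : β}
    (hf : StrictAntiOn f (Ioi a)) (hlim : Tendsto f atTop (nhds b)) {z : α} (hz : a < z) :
    b < f z := by
  have : Nonempty α := ⟨z⟩
  obtain ⟨w, hzw⟩ := exists_gt z
  have hbw : b ≤ f w :=
    le_of_tendsto hlim <| (eventually_gt_atTop w).mono fun v hwv =>
      (hf (hz.trans hzw) (hz.trans (hzw.trans hwv)) hwv).le
  exact hbw.trans_lt (hf hz (hz.trans hzw) hzw)

theorem monotoneOn_add_mul_log_of_neg_div_le_deriv {f : ℝ → ℝ} {K : ℝ}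
    (hf : DifferentiableOn ℝ f (Ioi 0)) (hf' : ∀ z, 0 < z → -K / z ≤ deriv f z) :
    MonotoneOn (fun z => f z + K * log z) (Ioi 0) := by
  have hlog : DifferentiableOn ℝ log (Ioi 0) := fun z hz =>
    (differentiableAt_log (ne_of_gt hz)).differentiableWithinAt
  have hg : DifferentiableOn ℝ (fun z => f z + K * log z) (Ioi 0) :=
    hf.add (hlog.const_mul K)
  refine monotoneOn_of_deriv_nonneg (convex_Ioi 0) hg.continuousOn
    (by rwa [interior_Ioi]) fun z hz => ?_
  rw [interior_Ioi] at hz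
  have hfz : DifferentiableAt ℝ f z := hf.differentiableAt (Ioi_mem_nhds hz)
  have hd : HasDerivAt (fun z => f z + K * log z) (deriv f z + K * z⁻¹) z :=
    hfz.hasDerivAt.add ((hasDerivAt_log (ne_of_gt hz)).const_mul K)
  rw [hd.deriv]
  have := hf' z hz
  rw [neg_div, div_eq_mul_inv] at this
  linarith

theorem le_add_mul_max_neg_log {f : ℝ → ℝ} {K : ℝ} (hK : 0 ≤ K)
    (hanti : AntitoneOn f (Ioi 0)) (hmono : MonotoneOn (fun z => f z + K * log z) (Ioi 0))
    {z : ℝ} (hz : 0 < z) : f z ≤ f 1 + K * max (-log z) 0 := by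
  rcases le_total 1 z with h1 | h1
  · have := hanti (mem_Ioi.2 one_pos) (mem_Ioi.2 hz) h1
    have : 0 ≤ K * max (-log z) 0 := mul_nonneg hK (le_max_right _ _)
    linarith
  · have hmz : f z + K * log z ≤ f 1 + K * log 1 := hmono (mem_Ioi.2 hz) (mem_Ioi.2 one_pos) h1
    rw [log_one, mul_zero, add_zero] at hmz
    calc f z ≤ f 1 + K * -log z := by linarith
      _ ≤ f 1 + K * max (-log z) 0 := by gcongr; exact le_max_left _ _

theorem max_neg_log_mul_rpow_neg_le {ρ θ a : ℝ} (hρ : 0 < ρ) (hθ : 0 < θ) (ha : 0 ≤ a) :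
    max (-log (ρ * θ ^ (-a))) 0 ≤ |log ρ| + a * max (log θ) 0 := by
  rw [log_mul hρ.ne' (rpow_pos_of_pos hθ _).ne', log_rpow hθ]
  have := neg_le_abs (log ρ)
  have := mul_le_mul_of_nonneg_left (le_max_left (log θ) 0) ha
  have := mul_nonneg ha (le_max_right (log θ) 0)
  exact max_le (by linarith) (by linarith [abs_nonneg (log ρ)])

theorem neg_mul_div_le_neg_mul_div_sq {k c E z : ℝ} (hk : 0 ≤ k) (hz : 0 < z)
    (hEc : E ≤ c * z) : -(k * c) / z ≤ -k * E / z ^ 2 := by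
  rw [div_le_div_iff₀ hz (by positivity)]
  nlinarith [mul_le_mul_of_nonneg_left hEc (mul_nonneg hk hz.le)]

theorem stmt_9_general (c : ℝ) (hc : 0 < c) (P S : ℝ → ℝ)
    (hS : ContDiffOn ℝ 1 S (Ioi 0))
    (hS' : ∀ Z : ℝ, 0 < Z →
      deriv S Z = -(3/2) * (5/3 * P Z - deriv P Z * Z) / Z^2)
    (hstab : ∀ Z : ℝ, 0 < Z →
      0 < 5/3 * P Z - deriv P Z * Z ∧ 5/3 * P Z - deriv P Z * Z ≤ c * Z)
    (hthird : Filter.Tendsto S Filter.atTop (nhds 0)) :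
    (∀ ρ θ : ℝ, 0 < ρ → 0 < θ → 0 < S (ρ * θ ^ (-(3:ℝ)/2))) ∧
    ∃ C : ℝ, 0 < C ∧ ∀ ρ θ : ℝ, 0 < ρ → 0 < θ →
      S (ρ * θ ^ (-(3:ℝ)/2)) ≤ C * (1 + |Real.log ρ| + max (Real.log θ) 0) := by
  have hderiv : ∀ z, 0 < z → -(3/2 * c) / z ≤ deriv S z ∧ deriv S z < 0 := by
    intro z hz
    obtain ⟨hE, hEc⟩ := hstab z hz
    rw [hS' z hz]
    exact ⟨neg_mul_div_le_neg_mul_div_sq (by norm_num) hz hEc,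
      div_neg_of_neg_of_pos (by linarith) (by positivity)⟩
  have hanti : StrictAntiOn S (Ioi 0) :=
    strictAntiOn_of_deriv_neg (convex_Ioi 0) hS.continuousOn
      (by simpa only [interior_Ioi] using fun z (hz : z ∈ Ioi 0) => (hderiv z hz).2)
  have hpos : ∀ z, 0 < z → 0 < S z := fun z hz => hanti.lt_of_tendsto_atTop hthird hz
  have hmono := monotoneOn_add_mul_log_of_neg_div_le_deriv
    (hS.differentiableOn one_ne_zero) fun z hz => (hderiv z hz).1
  refine ⟨fun ρ θ hρ hθ => hpos _ (by positivity), S 1 + 9/4 * c,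
    by linarith [hpos 1 one_pos], fun ρ θ hρ hθ => ?_⟩
  have hbound := le_add_mul_max_neg_log (by positivity) hanti.antitoneOn hmono
    (show 0 < ρ * θ ^ (-(3:ℝ)/2) by positivity)
  rw [neg_div] at hbound ⊢
  have hlog := max_neg_log_mul_rpow_neg_le hρ hθ (show (0:ℝ) ≤ 3/2 by norm_num)
  calc S (ρ * θ ^ (-(3/2)))
      ≤ S 1 + 3/2 * c * (|log ρ| + 3/2 * max (log θ) 0) := hbound.trans (by gcongr)
    _ ≤ (S 1 + 9/4 * c) * (1 + |log ρ| + max (log θ) 0) := by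
      nlinarith [hpos 1 one_pos, abs_nonneg (log ρ), le_max_right (log θ) 0]

/-- if `𝒮' = −(3/2)((5/3)P − P'Z)/Z²` with
`0 < (5/3)P(Z) − P'(Z)Z ≤ cZ`, and `𝒮(Z) → 0` as `Z → ∞` (Third law), then the
molecular entropy `s_m(ρ,θ) = 𝒮(ρθ^{−3/2})` is positive and satisfies
`s_m(ρ,θ) ≤ C (1 + |log ρ| + max(log θ, 0))`. -/
theorem stmt_9 (c : ℝ) (hc : 0 < c) (P S : ℝ → ℝ)
    (hP : ContDiffOn ℝ 1 P (Ioi 0)) (hS : ContDiffOn ℝ 1 S (Ioi 0))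
    (hS' : ∀ Z : ℝ, 0 < Z →
      deriv S Z = -(3/2) * (5/3 * P Z - deriv P Z * Z) / Z^2)
    (hstab : ∀ Z : ℝ, 0 < Z →
      0 < 5/3 * P Z - deriv P Z * Z ∧ 5/3 * P Z - deriv P Z * Z ≤ c * Z)
    (hthird : Filter.Tendsto S Filter.atTop (nhds 0)) :
    (∀ ρ θ : ℝ, 0 < ρ → 0 < θ → 0 < S (ρ * θ ^ (-(3:ℝ)/2))) ∧
    ∃ C : ℝ, 0 < C ∧ ∀ ρ θ : ℝ, 0 < ρ → 0 < θ →
      S (ρ * θ ^ (-(3:ℝ)/2)) ≤ C * (1 + |Real.log ρ| + max (Real.log θ) 0) :=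
  stmt_9_general c hc P S hS hS' hstab hthird
end

section
/- Let T > 0, μ > 0, and let r : [0,1] → (0,∞) be continuous. Let U : [0,T] × ℝ² × [0,1] → ℝ² and Π : [0,T] × ℝ² × [0,1] → ℝ be continuous, 2-periodic in each horizontal coordinate, with U of class C¹ in t and C² in x = (x_h, x₃) and Π of class C¹ in x, all with jointly continuous derivatives. Suppose that on (0,T) × ℝ² × (0,1): div_h U = 0 and r(x₃) ( ∂_t U + (U·∇_h)U ) + ∇_h Π = μ ( Δ_h U + ∂²_{x₃x₃} U ), and that U(t, x_h, 0) = U(t, x_h, 1) = 0 for all t, x_h. Then the horizontal average Ū(t, x₃) := ∫_{[-1,1]²} U(t, x_h, x₃) dx_h satisfies the one-dimensional heat equation r(x₃) ∂_t Ū(t,x₃) = μ ∂²_{x₃x₃} Ū(t,x₃) on (0,T) × (0,1), with boundary conditions Ū(t,0) = Ū(t,1) = 0. -/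
/-!
Integrate the momentum equation over the periodic cell `[-1,1]²`. Because `div_h U = 0`, the
transport term is a horizontal divergence, `(U·∇_h)U = div_h (U ⊗ U)`, and so are
`∇_h Π = div_h (Π Id)` and `Δ_h U = div_h (∇_h U)`; by the divergence theorem and periodicity
their cell integrals vanish. The remaining terms `∂_t U` and `∂²_{x₃x₃} U` commute with the
horizontal integral, by differentiation under the integral sign with the continuous derivatives
bounded on compact sets. The boundary values average to zero.
-/

open Set MeasureTheory Function Metric Topology

section

variable {E : Type*} [NormedAddCommGroup E] [NormedSpace ℝ E]

theorem periodic_single_of_forall_int {ι α : Type*} [DecidableEq ι] {φ : (ι → ℝ) → α} {c : ℝ}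
    (h : ∀ x (k : ι → ℤ), φ (x + fun i => c * (k i : ℝ)) = φ x) (i : ι) :
    Periodic φ (Pi.single i c) := fun x => by
  convert h x (Pi.single i 1) using 3
  ext j
  simp [Pi.single_apply]

theorem Function.Periodic.fderiv {F : Type*} [NormedAddCommGroup F] [NormedSpace ℝ F]
    {f : F → E} {c : F} (hf : Periodic f c) : Periodic (fderiv ℝ f) c := fun x => by
  rw [← fderiv_comp_add_right, hf.funext]

theorem continuous_sum_fderiv_apply_single {n : ℕ} {f : Fin (n + 1) → (Fin (n + 1) → ℝ) → E}
    (hf : ∀ i, ContDiff ℝ 1 (f i)) :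
    Continuous fun x => ∑ i, fderiv ℝ (f i) x (Pi.single i 1) :=
  continuous_finsetSum _ fun i _ =>
    ((hf i).continuous_fderiv one_ne_zero).clm_apply continuous_const

theorem integral_Icc_sum_fderiv_eq_zero_of_periodic {n : ℕ} {a b : Fin (n + 1) → ℝ}
    (hab : a ≤ b) {f : Fin (n + 1) → (Fin (n + 1) → ℝ) → E} (hf : ∀ i, ContDiff ℝ 1 (f i))
    (hper : ∀ i, Periodic (f i) (Pi.single i (b i - a i))) :
    ∫ x in Icc a b, ∑ i, fderiv ℝ (f i) x (Pi.single i 1) = 0 := by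
  rw [integral_divergence_of_hasFDerivAt_off_countable' a b hab f (fun i => fderiv ℝ (f i)) ∅
    countable_empty (fun i => (hf i).continuous.continuousOn)
    (fun x _ i => ((hf i).differentiable one_ne_zero x).hasFDerivAt)
    (continuous_sum_fderiv_apply_single hf).integrableOn_Icc]
  refine Finset.sum_eq_zero fun i _ => sub_eq_zero.2 <| integral_congr_ae <| ae_of_all _ fun y => ?_
  dsimp only
  rw [sub_eq_iff_eq_add'.1 (Fin.insertNth_sub_same (α := fun _ => ℝ) i (b i) (a i) y)]
  exact hper i _

section Transport

variable {ι : Type*} [Fintype ι] [DecidableEq ι]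

theorem sum_smul_fderiv_eq_sum_fderiv_smul {v : (ι → ℝ) → ι → ℝ} {w : (ι → ℝ) → E}
    {x : ι → ℝ} (hv : DifferentiableAt ℝ v x) (hw : DifferentiableAt ℝ w x)
    (hdiv : ∑ i, fderiv ℝ (fun y => v y i) x (Pi.single i 1) = 0) :
    ∑ i, v x i • fderiv ℝ w x (Pi.single i 1)
      = ∑ i, fderiv ℝ (fun y => v y i • w y) x (Pi.single i 1) := by
  have hvi : ∀ i, DifferentiableAt ℝ (fun y => v y i) x := differentiableAt_pi.1 hv
  simp only [fderiv_fun_smul (hvi _) hw, add_apply, smul_apply,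
    ContinuousLinearMap.smulRight_apply, Finset.sum_add_distrib, ← Finset.sum_smul, hdiv,
    zero_smul, add_zero]

theorem sum_fderiv_smul_single {p : (ι → ℝ) → ℝ} {x : ι → ℝ} (hp : DifferentiableAt ℝ p x) :
    ∑ i, fderiv ℝ (fun y => p y • (Pi.single i 1 : ι → ℝ)) x (Pi.single i 1)
      = fun i => fderiv ℝ p x (Pi.single i 1) := by
  simp only [fderiv_smul_const hp, ContinuousLinearMap.smulRight_apply]
  ext j
  simp [Pi.single_apply]

end Transport

theorem hasDerivAt_setIntegral_of_continuousOn {X : Type*} [TopologicalSpace X] [T2Space X]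
    [MeasurableSpace X] [OpensMeasurableSpace X] {μ : Measure X} [IsFiniteMeasureOnCompacts μ]
    {F F' : ℝ → X → E} {K : Set X} {I : Set ℝ} {t : ℝ}
    (hK : IsCompact K) (hI : I ∈ 𝓝 t) (hF : ∀ s ∈ I, ContinuousOn (F s) K)
    (hF' : ContinuousOn (uncurry F') (I ×ˢ K))
    (hd : ∀ s ∈ I, ∀ x ∈ K, HasDerivAt (F · x) (F' s x) s) :
    HasDerivAt (fun s => ∫ x in K, F s x ∂μ) (∫ x in K, F' t x ∂μ) t := by
  obtain ⟨ε, hε, hball⟩ := nhds_basis_closedBall.mem_iff.1 hI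
  obtain ⟨C, hC⟩ := ((isCompact_closedBall t ε).prod hK).exists_bound_of_continuousOn
    (hF'.mono (prod_mono hball subset_rfl))
  have hFt' : ContinuousOn (F' t) K :=
    hF'.comp (continuousOn_const.prodMk continuousOn_id) fun x hx => ⟨mem_of_mem_nhds hI, hx⟩
  refine (hasDerivAt_integral_of_dominated_loc_of_deriv_le (bound := fun _ => C)
    (ball_mem_nhds t hε) ?_ ((hF t (mem_of_mem_nhds hI)).integrableOn_compact hK)
    (hFt'.integrableOn_compact hK).aestronglyMeasurable ?_
    (integrableOn_const hK.measure_lt_top.ne) ?_).2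
  · filter_upwards [hI] with s hs using ((hF s hs).integrableOn_compact hK).aestronglyMeasurable
  · refine ae_restrict_of_forall_mem hK.measurableSet fun x hx s hs => hC (s, x) ⟨?_, hx⟩
    exact ball_subset_closedBall hs
  · refine ae_restrict_of_forall_mem hK.measurableSet fun x hx s hs => hd s ?_ x hx
    exact hball (ball_subset_closedBall hs)

section Vertical

variable {X : Type*} [NormedAddCommGroup X] [NormedSpace ℝ X] {G : X → ℝ → E} {J : Set ℝ}

theorem ContDiffOn.hasDerivAt_snd {n : WithTop ℕ∞}
    (hG : ContDiffOn ℝ n (fun z : X × ℝ => G z.1 z.2) (univ ×ˢ J)) (hJ : IsOpen J) (hn : n ≠ 0)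
    (x : X) {w : ℝ} (hw : w ∈ J) :
    HasDerivAt (G x) (fderiv ℝ (fun z : X × ℝ => G z.1 z.2) (x, w) (0, 1)) w :=
  ((hG.contDiffAt ((isOpen_univ.prod hJ).mem_nhds ⟨trivial, hw⟩)).differentiableAt
    hn).hasFDerivAt.comp_hasDerivAt w ((hasDerivAt_const w x).prodMk (hasDerivAt_id w))

theorem ContDiffOn.contDiffOn_deriv_snd {m n : WithTop ℕ∞}
    (hG : ContDiffOn ℝ n (fun z : X × ℝ => G z.1 z.2) (univ ×ˢ J)) (hJ : IsOpen J)
    (hmn : m + 1 ≤ n) :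
    ContDiffOn ℝ m (fun z : X × ℝ => deriv (G z.1) z.2) (univ ×ˢ J) := by
  refine ((hG.fderiv_of_isOpen (isOpen_univ.prod hJ) hmn).clm_apply
    (contDiffOn_const (c := ((0 : X), (1 : ℝ))))).congr ?_
  rintro ⟨x, w⟩ ⟨-, hw⟩
  exact (hG.hasDerivAt_snd hJ (zero_lt_one.trans_le (le_add_self.trans hmn)).ne' x hw).deriv

theorem ContDiffOn.contDiff_apply_snd {n : WithTop ℕ∞}
    (hG : ContDiffOn ℝ n (fun z : X × ℝ => G z.1 z.2) (univ ×ˢ J)) {w : ℝ} (hw : w ∈ J) :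
    ContDiff ℝ n fun x => G x w :=
  contDiffOn_univ.1 <| hG.comp (contDiff_prodMk_left w).contDiffOn fun _ _ => ⟨trivial, hw⟩

theorem ContDiffOn.continuous_deriv_deriv_apply_snd
    (hG : ContDiffOn ℝ 2 (fun z : X × ℝ => G z.1 z.2) (univ ×ˢ J)) (hJ : IsOpen J) {w₀ : ℝ}
    (hw₀ : w₀ ∈ J) :
    Continuous fun x => deriv (fun w => deriv (fun v => G x v) w) w₀ := by
  have hG' := hG.contDiffOn_deriv_snd hJ (m := 1) (by norm_num)
  have hG'' := hG'.contDiffOn_deriv_snd (G := fun x v => deriv (G x) v) hJ (m := 0) (by norm_num)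
  exact (hG''.contDiff_apply_snd hw₀).continuous

variable [MeasurableSpace X] [BorelSpace X] {μ : Measure X} [IsFiniteMeasureOnCompacts μ]
  {K : Set X}

theorem ContDiffOn.hasDerivAt_setIntegral_snd
    (hG : ContDiffOn ℝ 1 (fun z : X × ℝ => G z.1 z.2) (univ ×ˢ J)) (hJ : IsOpen J)
    (hK : IsCompact K) {w : ℝ} (hw : w ∈ J) :
    HasDerivAt (fun v => ∫ x in K, G x v ∂μ) (∫ x in K, deriv (G x) w ∂μ) w := by
  refine hasDerivAt_setIntegral_of_continuousOn (F := fun v x => G x v)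
    (F' := fun v x => deriv (G x) v) hK (hJ.mem_nhds hw)
    (fun v hv => (hG.contDiff_apply_snd hv).continuous.continuousOn) ?_
    fun v hv x _ => (hG.hasDerivAt_snd hJ one_ne_zero x hv).differentiableAt.hasDerivAt
  exact (hG.contDiffOn_deriv_snd hJ (zero_add _).le).continuousOn.comp
    continuous_swap.continuousOn fun z hz => ⟨trivial, hz.1⟩

theorem ContDiffOn.deriv_deriv_setIntegral
    (hG : ContDiffOn ℝ 2 (fun z : X × ℝ => G z.1 z.2) (univ ×ˢ J)) (hJ : IsOpen J)
    (hK : IsCompact K) {w₀ : ℝ} (hw₀ : w₀ ∈ J) :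
    deriv (fun w => deriv (fun v => ∫ x in K, G x v ∂μ) w) w₀
      = ∫ x in K, deriv (fun w => deriv (fun v => G x v) w) w₀ ∂μ := by
  have hderiv : (fun w => deriv (fun v => ∫ x in K, G x v ∂μ) w)
      =ᶠ[𝓝 w₀] fun w => ∫ x in K, deriv (G x) w ∂μ := by
    filter_upwards [hJ.mem_nhds hw₀] with w hw
    exact ((hG.of_le one_le_two).hasDerivAt_setIntegral_snd hJ hK hw).deriv
  rw [hderiv.deriv_eq]
  exact ((hG.contDiffOn_deriv_snd hJ le_rfl).hasDerivAt_setIntegral_snd hJ hK hw₀).deriv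

end Vertical

end

theorem smul_setIntegral_eq_of_momentum_eq {n : ℕ}
    {u a b : (Fin (n + 1) → ℝ) → Fin (n + 1) → ℝ} {p : (Fin (n + 1) → ℝ) → ℝ} {ρ ν : ℝ}
    (hu : ContDiff ℝ 2 u) (hp : ContDiff ℝ 1 p)
    (hu_per : ∀ x (k : Fin (n + 1) → ℤ), u (x + fun i => 2 * (k i : ℝ)) = u x)
    (hp_per : ∀ x (k : Fin (n + 1) → ℤ), p (x + fun i => 2 * (k i : ℝ)) = p x)
    (ha : Continuous a) (hb : Continuous b)
    (hdiv : ∀ x, ∑ i, fderiv ℝ (fun y => u y i) x (Pi.single i 1) = 0)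
    (hmom : ∀ x, ρ • (a x + ∑ i, u x i • fderiv ℝ u x (Pi.single i 1))
        + (fun i => fderiv ℝ p x (Pi.single i 1))
      = ν • (∑ i, fderiv ℝ (fun y => fderiv ℝ u y (Pi.single i 1)) x (Pi.single i 1) + b x)) :
    ρ • ∫ x in Icc (-1) 1, a x = ν • ∫ x in Icc (-1) 1, b x := by
  have hcell : ∀ i : Fin (n + 1), (1 : Fin (n + 1) → ℝ) i - (-1 : Fin (n + 1) → ℝ) i = 2 :=
    fun i => by norm_num
  have hu_per' := periodic_single_of_forall_int hu_per
  have hp_per' := periodic_single_of_forall_int hp_per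
  have hu1 : ContDiff ℝ 1 u := hu.of_le one_le_two
  have hN_diff : ∀ i, ContDiff ℝ 1 fun y => u y i • u y :=
    fun i => ((contDiff_apply ℝ ℝ i).comp hu1).smul hu1
  have hP_diff : ∀ i, ContDiff ℝ 1 fun y => p y • (Pi.single i 1 : Fin (n + 1) → ℝ) :=
    fun i => hp.smul contDiff_const
  have hL_diff : ∀ i, ContDiff ℝ 1 fun y => fderiv ℝ u y (Pi.single i 1) :=
    fun i => (hu.fderiv_right one_add_one_eq_two.le).clm_apply contDiff_const
  have hN := integral_Icc_sum_fderiv_eq_zero_of_periodic (neg_le_self zero_le_one) hN_diff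
    fun i => by rw [hcell]; exact (hu_per' i).comp fun v => v i • v
  have hP := integral_Icc_sum_fderiv_eq_zero_of_periodic (neg_le_self zero_le_one) hP_diff
    fun i => by rw [hcell]; exact (hp_per' i).comp fun s => s • (Pi.single i 1 : Fin (n + 1) → ℝ)
  have hL := integral_Icc_sum_fderiv_eq_zero_of_periodic (neg_le_self zero_le_one) hL_diff
    fun i => by rw [hcell]; exact (hu_per' i).fderiv.comp fun L => L (Pi.single i 1)
  have hmom' : ∀ x, ρ • (a x + ∑ i, fderiv ℝ (fun y => u y i • u y) x (Pi.single i 1))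
        + ∑ i, fderiv ℝ (fun y => p y • (Pi.single i 1 : Fin (n + 1) → ℝ)) x (Pi.single i 1)
      = ν • (∑ i, fderiv ℝ (fun y => fderiv ℝ u y (Pi.single i 1)) x (Pi.single i 1) + b x) :=
    fun x => by
      rw [← sum_smul_fderiv_eq_sum_fderiv_smul (hu1.differentiable one_ne_zero x)
        (hu1.differentiable one_ne_zero x) (hdiv x),
        sum_fderiv_smul_single (hp.differentiable one_ne_zero x)]
      exact hmom x
  have ia := ha.integrableOn_Icc (μ := volume) (a := -1) (b := 1)
  have iN := (continuous_sum_fderiv_apply_single hN_diff).integrableOn_Icc (μ := volume)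
    (a := -1) (b := 1)
  have iP := (continuous_sum_fderiv_apply_single hP_diff).integrableOn_Icc (μ := volume)
    (a := -1) (b := 1)
  have iL := (continuous_sum_fderiv_apply_single hL_diff).integrableOn_Icc (μ := volume)
    (a := -1) (b := 1)
  calc ρ • ∫ x in Icc (-1) 1, a x
      = ∫ x in Icc (-1) 1, ρ • (a x + ∑ i, fderiv ℝ (fun y => u y i • u y) x (Pi.single i 1))
        + ∑ i, fderiv ℝ (fun y => p y • (Pi.single i 1 : Fin (n + 1) → ℝ)) x (Pi.single i 1) := by
        rw [integral_add ((ia.fun_add iN).fun_smul ρ) iP, integral_smul, integral_add ia iN, hN,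
          hP, add_zero, add_zero]
    _ = ∫ x in Icc (-1) 1,
          ν • (∑ i, fderiv ℝ (fun y => fderiv ℝ u y (Pi.single i 1)) x (Pi.single i 1) + b x) :=
        congrArg _ (funext hmom')
    _ = ν • ∫ x in Icc (-1) 1, b x := by
        rw [integral_smul, integral_add iL hb.integrableOn_Icc, hL, zero_add]

theorem stmt_15_general (T μ : ℝ) (r : ℝ → ℝ)
    (U : ℝ → (Fin 2 → ℝ) → ℝ → (Fin 2 → ℝ)) (Pres : ℝ → (Fin 2 → ℝ) → ℝ → ℝ)
    -- 2-periodicity in each horizontal coordinate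
    (hUper : ∀ (t : ℝ) (xh : Fin 2 → ℝ) (x₃ : ℝ) (k : Fin 2 → ℤ),
      U t (xh + fun i => 2 * (k i : ℝ)) x₃ = U t xh x₃)
    (hPper : ∀ (t : ℝ) (xh : Fin 2 → ℝ) (x₃ : ℝ) (k : Fin 2 → ℤ),
      Pres t (xh + fun i => 2 * (k i : ℝ)) x₃ = Pres t xh x₃)
    -- U is C¹ in time, with jointly continuous time derivative
    (hUt : ∀ t ∈ Ioo 0 T, ∀ (xh : Fin 2 → ℝ), ∀ x₃ ∈ Ioo (0:ℝ) 1,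
      DifferentiableAt ℝ (fun s => U s xh x₃) t)
    (hUtc : ContinuousOn
      (fun q : ℝ × (Fin 2 → ℝ) × ℝ => deriv (fun s => U s q.2.1 q.2.2) q.1)
      (Ioo 0 T ×ˢ (univ ×ˢ Ioo 0 1)))
    -- U is C² in the space variable x = (x_h, x₃), with jointly continuous derivatives
    (hUx : ∀ t ∈ Ioo 0 T, ContDiffOn ℝ 2
      (fun z : (Fin 2 → ℝ) × ℝ => U t z.1 z.2) (univ ×ˢ Ioo 0 1))
    -- Π is C¹ in the space variable
    (hPx : ∀ t ∈ Ioo 0 T, ContDiffOn ℝ 1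
      (fun z : (Fin 2 → ℝ) × ℝ => Pres t z.1 z.2) (univ ×ˢ Ioo 0 1))
    -- horizontal incompressibility: div_h U = 0
    (hdiv : ∀ t ∈ Ioo 0 T, ∀ (xh : Fin 2 → ℝ), ∀ x₃ ∈ Ioo (0:ℝ) 1,
      (∑ i, fderiv ℝ (fun y => U t y x₃ i) xh (Pi.single i 1)) = 0)
    -- momentum equation: r(x₃)(∂_t U + (U·∇_h)U) + ∇_h Π = μ(Δ_h U + ∂²_{x₃x₃}U)
    (hmom : ∀ t ∈ Ioo 0 T, ∀ (xh : Fin 2 → ℝ), ∀ x₃ ∈ Ioo (0:ℝ) 1,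
      r x₃ • (deriv (fun s => U s xh x₃) t
          + ∑ i, U t xh x₃ i • fderiv ℝ (fun y => U t y x₃) xh (Pi.single i 1))
        + (fun i => fderiv ℝ (fun y => Pres t y x₃) xh (Pi.single i 1))
        = μ • ((∑ i, fderiv ℝ
              (fun y => fderiv ℝ (fun z => U t z x₃) y (Pi.single i 1)) xh
              (Pi.single i 1))
            + deriv (fun w => deriv (fun v => U t xh v) w) x₃))
    -- no-slip boundary conditions at the two plates
    (hbc : ∀ t ∈ Icc 0 T, ∀ xh : Fin 2 → ℝ, U t xh 0 = 0 ∧ U t xh 1 = 0) :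
    (∀ t ∈ Ioo 0 T, ∀ x₃ ∈ Ioo (0:ℝ) 1,
      r x₃ • deriv (fun s => ∫ xh in Icc (-1 : Fin 2 → ℝ) 1, U s xh x₃) t
        = μ • deriv (fun w =>
            deriv (fun v => ∫ xh in Icc (-1 : Fin 2 → ℝ) 1, U t xh v) w) x₃) ∧
    (∀ t ∈ Icc 0 T,
      (∫ xh in Icc (-1 : Fin 2 → ℝ) 1, U t xh 0) = (0 : Fin 2 → ℝ) ∧
      (∫ xh in Icc (-1 : Fin 2 → ℝ) 1, U t xh 1) = (0 : Fin 2 → ℝ)) := by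
  refine ⟨fun t ht x₃ hx₃ => ?_, fun t ht => by simp [hbc t ht]⟩
  have hslice : ∀ s ∈ Ioo 0 T, ContDiff ℝ 2 fun xh => U s xh x₃ :=
    fun s hs => (hUx s hs).contDiff_apply_snd hx₃
  have hUtc_slice : Continuous fun xh => deriv (fun s => U s xh x₃) t :=
    hUtc.comp_continuous (continuous_const.prodMk (continuous_id.prodMk continuous_const))
      fun _ => ⟨ht, trivial, hx₃⟩
  have htime : HasDerivAt (fun s => ∫ xh in Icc (-1 : Fin 2 → ℝ) 1, U s xh x₃)
      (∫ xh in Icc (-1 : Fin 2 → ℝ) 1, deriv (fun s => U s xh x₃) t) t :=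
    hasDerivAt_setIntegral_of_continuousOn (F := fun s xh => U s xh x₃)
      (F' := fun s xh => deriv (fun s => U s xh x₃) s) isCompact_Icc (Ioo_mem_nhds ht.1 ht.2)
      (fun s hs => (hslice s hs).continuous.continuousOn)
      (hUtc.comp (continuousOn_fst.prodMk (continuousOn_snd.prodMk continuousOn_const))
        fun q hq => ⟨hq.1, trivial, hx₃⟩)
      fun s hs xh _ => (hUt s hs xh x₃ hx₃).hasDerivAt
  rw [htime.deriv, (hUx t ht).deriv_deriv_setIntegral isOpen_Ioo isCompact_Icc hx₃]
  exact smul_setIntegral_eq_of_momentum_eq (hslice t ht) ((hPx t ht).contDiff_apply_snd hx₃)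
    (fun xh => hUper t xh x₃) (fun xh => hPper t xh x₃) hUtc_slice
    ((hUx t ht).continuous_deriv_deriv_apply_snd isOpen_Ioo hx₃)
    (fun xh => hdiv t ht xh x₃ hx₃) fun xh => hmom t ht xh x₃ hx₃

/-- for Majda's "stack of pancakes" system
`div_h U = 0`, `r(x₃)(∂_t U + (U·∇_h)U) + ∇_h Π = μ(Δ_h U + ∂²_{x₃x₃} U)`
in the horizontally `2`-periodic layer `ℝ² × (0,1)` with no-slip conditions at
`x₃ = 0, 1`, the horizontal average `Ū(t,x₃) = ∫_{[-1,1]²} U(t,x_h,x₃) dx_h`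
solves the one-dimensional heat equation `r(x₃) ∂_t Ū = μ ∂²_{x₃x₃} Ū` on
`(0,T) × (0,1)` with `Ū(t,0) = Ū(t,1) = 0`. -/
theorem stmt_15 (T μ : ℝ) (hT : 0 < T) (hμ : 0 < μ)
    (r : ℝ → ℝ) (hr : ContinuousOn r (Icc 0 1))
    (hrpos : ∀ x₃ ∈ Icc (0:ℝ) 1, 0 < r x₃)
    (U : ℝ → (Fin 2 → ℝ) → ℝ → (Fin 2 → ℝ)) (Pres : ℝ → (Fin 2 → ℝ) → ℝ → ℝ)
    -- 2-periodicity in each horizontal coordinate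
    (hUper : ∀ (t : ℝ) (xh : Fin 2 → ℝ) (x₃ : ℝ) (k : Fin 2 → ℤ),
      U t (xh + fun i => 2 * (k i : ℝ)) x₃ = U t xh x₃)
    (hPper : ∀ (t : ℝ) (xh : Fin 2 → ℝ) (x₃ : ℝ) (k : Fin 2 → ℤ),
      Pres t (xh + fun i => 2 * (k i : ℝ)) x₃ = Pres t xh x₃)
    -- continuity of U and Π on the closed space-time domain
    (hUc : ContinuousOn (fun q : ℝ × (Fin 2 → ℝ) × ℝ => U q.1 q.2.1 q.2.2)
      (Icc 0 T ×ˢ (univ ×ˢ Icc 0 1)))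
    (hPc : ContinuousOn (fun q : ℝ × (Fin 2 → ℝ) × ℝ => Pres q.1 q.2.1 q.2.2)
      (Icc 0 T ×ˢ (univ ×ˢ Icc 0 1)))
    -- U is C¹ in time, with jointly continuous time derivative
    (hUt : ∀ t ∈ Ioo 0 T, ∀ (xh : Fin 2 → ℝ), ∀ x₃ ∈ Ioo (0:ℝ) 1,
      DifferentiableAt ℝ (fun s => U s xh x₃) t)
    (hUtc : ContinuousOn
      (fun q : ℝ × (Fin 2 → ℝ) × ℝ => deriv (fun s => U s q.2.1 q.2.2) q.1)
      (Ioo 0 T ×ˢ (univ ×ˢ Ioo 0 1)))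
    -- U is C² in the space variable x = (x_h, x₃), with jointly continuous derivatives
    (hUx : ∀ t ∈ Ioo 0 T, ContDiffOn ℝ 2
      (fun z : (Fin 2 → ℝ) × ℝ => U t z.1 z.2) (univ ×ˢ Ioo 0 1))
    (hUxc : ContinuousOn (fun q : ℝ × (Fin 2 → ℝ) × ℝ =>
        fderiv ℝ (fun z : (Fin 2 → ℝ) × ℝ => U q.1 z.1 z.2) (q.2.1, q.2.2))
      (Ioo 0 T ×ˢ (univ ×ˢ Ioo 0 1)))
    (hUxxc : ContinuousOn (fun q : ℝ × (Fin 2 → ℝ) × ℝ =>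
        fderiv ℝ (fderiv ℝ (fun z : (Fin 2 → ℝ) × ℝ => U q.1 z.1 z.2)) (q.2.1, q.2.2))
      (Ioo 0 T ×ˢ (univ ×ˢ Ioo 0 1)))
    -- Π is C¹ in the space variable
    (hPx : ∀ t ∈ Ioo 0 T, ContDiffOn ℝ 1
      (fun z : (Fin 2 → ℝ) × ℝ => Pres t z.1 z.2) (univ ×ˢ Ioo 0 1))
    -- horizontal incompressibility: div_h U = 0
    (hdiv : ∀ t ∈ Ioo 0 T, ∀ (xh : Fin 2 → ℝ), ∀ x₃ ∈ Ioo (0:ℝ) 1,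
      (∑ i, fderiv ℝ (fun y => U t y x₃ i) xh (Pi.single i 1)) = 0)
    -- momentum equation: r(x₃)(∂_t U + (U·∇_h)U) + ∇_h Π = μ(Δ_h U + ∂²_{x₃x₃}U)
    (hmom : ∀ t ∈ Ioo 0 T, ∀ (xh : Fin 2 → ℝ), ∀ x₃ ∈ Ioo (0:ℝ) 1,
      r x₃ • (deriv (fun s => U s xh x₃) t
          + ∑ i, U t xh x₃ i • fderiv ℝ (fun y => U t y x₃) xh (Pi.single i 1))
        + (fun i => fderiv ℝ (fun y => Pres t y x₃) xh (Pi.single i 1))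
        = μ • ((∑ i, fderiv ℝ
              (fun y => fderiv ℝ (fun z => U t z x₃) y (Pi.single i 1)) xh
              (Pi.single i 1))
            + deriv (fun w => deriv (fun v => U t xh v) w) x₃))
    -- no-slip boundary conditions at the two plates
    (hbc : ∀ t ∈ Icc 0 T, ∀ xh : Fin 2 → ℝ, U t xh 0 = 0 ∧ U t xh 1 = 0) :
    (∀ t ∈ Ioo 0 T, ∀ x₃ ∈ Ioo (0:ℝ) 1,
      r x₃ • deriv (fun s => ∫ xh in Icc (-1 : Fin 2 → ℝ) 1, U s xh x₃) t
        = μ • deriv (fun w =>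
            deriv (fun v => ∫ xh in Icc (-1 : Fin 2 → ℝ) 1, U t xh v) w) x₃) ∧
    (∀ t ∈ Icc 0 T,
      (∫ xh in Icc (-1 : Fin 2 → ℝ) 1, U t xh 0) = (0 : Fin 2 → ℝ) ∧
      (∫ xh in Icc (-1 : Fin 2 → ℝ) 1, U t xh 1) = (0 : Fin 2 → ℝ)) :=
  stmt_15_general T μ r U Pres hUper hPper hUt hUtc hUx hPx hdiv hmom hbc
end
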